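/- arXiv:1702.04737 — 2 statements merged into one kernel-verified Lean document; each statement's English description precedes it below -/
import Mathlib

section
/- Let V be a real symmetric 2n×2n matrix with V + iΩ ≻ 0, and let M be a principal square-root matrix for V. Then, as an identity of invertible complex 2n×2n matrices, (Mᵀ)^{-1} V^{-1} (V + iΩ) V^{-1} M^{-1} = (V − iΩ)^{-1}. (Equivalently, since (Mᵀ)² = I + (ΩV)^{-2}: (I + (ΩV)^{-2})^{-1/2} V^{-1} (V + iΩ) V^{-1} (I + (VΩ)^{-2})^{-1/2} = (V − iΩ)^{-1}.) -/
/-!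
Put `J = Ω V⁻¹`, so that `V + iΩ = (1 + iJ) V`, `V - iΩ = (1 - iJ) V` and, since
`(VΩ)⁻¹ = Ω⁻¹ V⁻¹ = -J`, `M² = 1 + J² = (1 + iJ)(1 - iJ)`. The identity then follows by cancellation once we know that
`M` commutes with `J` and that `M V = V Mᵀ`.

Both facts come from the uniqueness of principal square roots in the form: if `X² Z = Z Y²` and
the spectra of `X` and `Y` lie in the open right half-plane, then `X Z = Z Y`. Indeed
`X (XZ - ZY) = (XZ - ZY) (-Y)` is a Sylvester equation whose coefficients `X` and `-Y` have
disjoint spectra, so `XZ - ZY = 0`. Apply this with `Z = J`, `X = Y = M`, and with `Z = V`,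
`X = M`, `Y = Mᵀ`: here `V (J²)ᵀ = J² V` because `J V = Ω` is antisymmetric and `V` symmetric.
-/

noncomputable section
open Matrix
open scoped ComplexOrder

/-- The standard `2n × 2n` symplectic form matrix `Ω = [[0, I], [-I, 0]]`. -/
def Om (n : ℕ) : Matrix (Fin n ⊕ Fin n) (Fin n ⊕ Fin n) ℝ :=
  Matrix.fromBlocks 0 1 (-1) 0

/-- Complexification of a real matrix. -/
def cm {k l : Type*} (A : Matrix k l ℝ) : Matrix k l ℂ := A.map Complex.ofReal

open Polynomial Complex

theorem SemiconjBy.aeval {R A : Type*} [CommSemiring R] [Semiring A] [Algebra R A] {a x y : A}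
    (h : SemiconjBy a x y) (p : R[X]) : SemiconjBy a (aeval x p) (aeval y p) := by
  simp only [SemiconjBy, aeval_eq_sum_range, Finset.mul_sum, Finset.sum_mul, mul_smul_comm,
    smul_mul_assoc, (h.pow_right _).eq]

theorem Matrix.PosDef.of_add_I_smul {m : Type*} [Fintype m] {V Ω : Matrix m m ℂ}
    (hVT : Vᵀ = V) (hΩ : Ωᵀ = -Ω) (h : (V + I • Ω).PosDef) : V.PosDef := by
  have hT : (V - I • Ω).PosDef := by
    simpa [hVT, hΩ, sub_eq_add_neg] using h.transpose
  convert (h.add hT).smul (show (0 : ℝ) < 2⁻¹ by norm_num) using 1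
  ext i j
  simp only [add_apply, sub_apply, smul_apply, real_smul, ofReal_inv, ofReal_ofNat]
  ring

namespace Matrix

variable {m : Type*} [Fintype m] [DecidableEq m]

theorem spectrum_transpose {K : Type*} [Field K] (A : Matrix m m K) :
    spectrum K Aᵀ = spectrum K A := by
  ext μ
  simp only [mem_spectrum_iff_isRoot_charpoly, charpoly_transpose]

/-- Sylvester: `p = Y.charpoly` gives `p(X) Z = Z p(Y) = 0`, and `p(X)` is invertible by the
spectral mapping theorem. -/
theorem eq_zero_of_semiconjBy_of_disjoint_spectrum {K : Type*} [Field K] [IsAlgClosed K]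
    {X Y Z : Matrix m m K} (h : SemiconjBy Z Y X)
    (hXY : Disjoint (spectrum K X) (spectrum K Y)) : Z = 0 := by
  rcases isEmpty_or_nonempty m with hm | hm
  · exact Subsingleton.elim _ _
  have hdeg : 0 < Y.charpoly.degree := by
    rw [charpoly_degree_eq_dim]
    exact_mod_cast Fintype.card_pos
  have hunit : IsUnit (aeval X Y.charpoly) := by
    rw [← spectrum.zero_notMem_iff K, spectrum.map_polynomial_aeval_of_degree_pos _ _ hdeg]
    rintro ⟨μ, hμX, hμY⟩
    exact hXY.ne_of_mem hμX (mem_spectrum_iff_isRoot_charpoly.2 hμY) rfl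
  have hZ := (h.aeval Y.charpoly).eq
  rw [aeval_self_charpoly, mul_zero] at hZ
  exact hunit.mul_right_eq_zero.1 hZ.symm

def IsPrincipalSqrt (M S : Matrix m m ℂ) : Prop :=
  M * M = S ∧ ∀ μ ∈ spectrum ℂ M, 0 < μ.re

namespace IsPrincipalSqrt

variable {M S : Matrix m m ℂ}

theorem semiconjBy {X Y Z T : Matrix m m ℂ} (hX : X.IsPrincipalSqrt S)
    (hY : Y.IsPrincipalSqrt T) (h : SemiconjBy Z T S) : SemiconjBy Z Y X := by
  have hsylv : SemiconjBy (X * Z - Z * Y) (-Y) X := by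
    simp only [SemiconjBy, mul_sub, sub_mul, mul_neg, ← mul_assoc, hX.1]
    rw [mul_assoc Z, hY.1, h.eq]
    abel
  have hdisj : Disjoint (spectrum ℂ X) (spectrum ℂ (-Y)) := by
    rw [← spectrum.neg_eq, Set.disjoint_left]
    intro μ hμX hμY
    have hre := hY.2 _ (Set.mem_neg.1 hμY)
    rw [neg_re] at hre
    linarith [hX.2 μ hμX]
  exact (sub_eq_zero.1 (eq_zero_of_semiconjBy_of_disjoint_spectrum hsylv hdisj)).symm

theorem commute {J : Matrix m m ℂ} (hM : M.IsPrincipalSqrt S) (h : Commute S J) :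
    Commute M J :=
  (hM.semiconjBy hM h.symm).symm

theorem transpose (hM : M.IsPrincipalSqrt S) : Mᵀ.IsPrincipalSqrt Sᵀ :=
  ⟨by rw [← transpose_mul, hM.1], by rw [spectrum_transpose]; exact hM.2⟩

theorem isUnit_det (hM : M.IsPrincipalSqrt S) : IsUnit M.det := by
  rw [← isUnit_iff_isUnit_det, ← spectrum.zero_notMem_iff ℂ]
  intro h0
  simpa using hM.2 0 h0

end IsPrincipalSqrt

theorem inv_sub_I_smul_eq_of_isPrincipalSqrt {V Ω M : Matrix m m ℂ} (hV : IsUnit V.det)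
    (hVT : Vᵀ = V) (hΩ : Ωᵀ = -Ω) (hM : M.IsPrincipalSqrt (1 + Ω * V⁻¹ * (Ω * V⁻¹))) :
    (Mᵀ)⁻¹ * V⁻¹ * (V + I • Ω) * V⁻¹ * M⁻¹ = (V - I • Ω)⁻¹ := by
  set J := Ω * V⁻¹ with hJ
  have hMJ : Commute M J :=
    hM.commute ((Commute.one_left J).add_left ((Commute.refl J).mul_left (Commute.refl J)))
  have hMV : M * V = V * Mᵀ := by
    refine (hM.semiconjBy hM.transpose ?_).eq.symm
    simp only [SemiconjBy, hJ, transpose_add, transpose_one, transpose_mul, transpose_nonsing_inv,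
      hVT, hΩ, mul_neg, neg_mul, neg_neg, mul_add, add_mul, mul_one, one_mul, mul_assoc,
      nonsing_inv_mul_cancel_right V _ hV, mul_nonsing_inv_cancel_left V _ hV]
  have hMu := hM.isUnit_det
  have hMinvJ : Commute M⁻¹ (1 - I • J) := by
    obtain ⟨u, rfl⟩ := (isUnit_iff_isUnit_det M).2 hMu
    rw [← coe_units_inv]
    exact ((Commute.one_right _).sub_right (hMJ.smul_right I)).units_inv_left
  have hplus : (V + I • Ω) * V⁻¹ = 1 + I • J := by
    rw [add_mul, mul_nonsing_inv _ hV, smul_mul_assoc]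
  have hminus : V - I • Ω = (1 - I • J) * V := by
    rw [sub_mul, one_mul, smul_mul_assoc, hJ, nonsing_inv_mul_cancel_right V _ hV]
  have hsq : (1 + I • J) * (1 - I • J) = M * M := by
    rw [hM.1]
    simp only [mul_sub, add_mul, mul_one, one_mul, smul_mul_smul, I_mul_I, neg_one_smul]
    abel
  refine (inv_eq_left_inv ?_).symm
  calc (Mᵀ)⁻¹ * V⁻¹ * (V + I • Ω) * V⁻¹ * M⁻¹ * (V - I • Ω)
      = (Mᵀ)⁻¹ * V⁻¹ * ((1 + I • J) * (1 - I • J) * M⁻¹ * V) := by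
        simp only [hminus, mul_assoc]
        rw [← mul_assoc (V + I • Ω) V⁻¹, hplus, hMinvJ.left_comm]
    _ = 1 := by
      rw [hsq, mul_nonsing_inv_cancel_right M _ hMu, hMV, mul_assoc,
        nonsing_inv_mul_cancel_left V _ hV, nonsing_inv_mul _ (isUnit_det_transpose _ hMu)]

end Matrix

section Complexification

variable {k l : Type*}

theorem cm_neg (A : Matrix k l ℝ) : cm (-A) = -cm A :=
  Matrix.map_neg _ ofReal_neg A

theorem cm_add (A B : Matrix k l ℝ) : cm (A + B) = cm A + cm B :=
  Matrix.map_add _ ofReal_add A B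

theorem cm_transpose (A : Matrix k l ℝ) : cm Aᵀ = (cm A)ᵀ :=
  transpose_map

theorem cm_mul [Fintype k] (A B : Matrix k k ℝ) : cm (A * B) = cm A * cm B :=
  Matrix.map_mul (f := ofRealHom)

variable [DecidableEq k]

theorem cm_one : cm (1 : Matrix k k ℝ) = 1 :=
  Matrix.map_one _ ofReal_zero ofReal_one

variable [Fintype k]

theorem cm_inv (A : Matrix k k ℝ) : cm A⁻¹ = (cm A)⁻¹ := by
  have hdet : (cm A).det = A.det := (RingHom.map_det ofRealHom A).symm
  have hadj : (cm A).adjugate = cm A.adjugate := (RingHom.map_adjugate ofRealHom A).symm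
  rw [Matrix.inv_def, Matrix.inv_def, hdet, hadj]
  ext i j
  simp [cm, Ring.inverse_eq_inv']

end Complexification

theorem Om_mul_Om (n : ℕ) : Om n * Om n = -1 := by
  simp [Om, fromBlocks_multiply, ← fromBlocks_one, fromBlocks_neg]

theorem Om_transpose (n : ℕ) : (Om n)ᵀ = -Om n := by
  simp [Om, fromBlocks_transpose, fromBlocks_neg]

theorem Om_inv (n : ℕ) : (Om n)⁻¹ = -Om n :=
  inv_eq_left_inv (by rw [neg_mul, Om_mul_Om, neg_neg])

theorem inversion_identity_general (n : ℕ)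
    (V M : Matrix (Fin n ⊕ Fin n) (Fin n ⊕ Fin n) ℝ)
    (hV : V.IsSymm)
    (hVpd : (cm V + Complex.I • cm (Om n)).PosDef)
    (hM2 : M * M = 1 + ((V * Om n)⁻¹) ^ 2)
    (hMeig : ∀ μ : ℂ, (cm M).charpoly.IsRoot μ → μ.im = 0 ∧ 0 < μ.re) :
    ((cm M)ᵀ)⁻¹ * (cm V)⁻¹ * (cm V + Complex.I • cm (Om n)) * (cm V)⁻¹ * (cm M)⁻¹
      = (cm V - Complex.I • cm (Om n))⁻¹ := by
  have hVT : (cm V)ᵀ = cm V := by rw [← cm_transpose, hV.eq]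
  have hΩ : (cm (Om n))ᵀ = -cm (Om n) := by rw [← cm_transpose, Om_transpose, cm_neg]
  have hVdet : IsUnit (cm V).det :=
    (isUnit_iff_isUnit_det _).1 (hVpd.of_add_I_smul hVT hΩ).isUnit
  have hM : (cm M).IsPrincipalSqrt (1 + cm (Om n) * (cm V)⁻¹ * (cm (Om n) * (cm V)⁻¹)) := by
    refine ⟨?_, fun μ hμ => (hMeig μ (mem_spectrum_iff_isRoot_charpoly.1 hμ)).2⟩
    rw [Matrix.mul_inv_rev, Om_inv, neg_mul, neg_sq, sq] at hM2
    rw [← cm_mul, hM2, cm_add, cm_one, cm_mul, cm_mul, cm_inv]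
  exact inv_sub_I_smul_eq_of_isPrincipalSqrt hVdet hVT hΩ hM

/-- For a real symmetric `V` with `V + iΩ ≻ 0` and `M` a principal square-root matrix for `V`
(`M` real, `M² = I + (VΩ)⁻²`, `M` commutes with `VΩ`, all complex eigenvalues of `M` positive
real), one has `(Mᵀ)⁻¹ V⁻¹ (V + iΩ) V⁻¹ M⁻¹ = (V - iΩ)⁻¹` as complex matrices. -/
theorem inversion_identity (n : ℕ)
    (V M : Matrix (Fin n ⊕ Fin n) (Fin n ⊕ Fin n) ℝ)
    (hV : V.IsSymm)
    (hVpd : (cm V + Complex.I • cm (Om n)).PosDef)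
    (hM2 : M * M = 1 + ((V * Om n)⁻¹) ^ 2)
    (hMcomm : M * (V * Om n) = (V * Om n) * M)
    (hMeig : ∀ μ : ℂ, (cm M).charpoly.IsRoot μ → μ.im = 0 ∧ 0 < μ.re) :
    ((cm M)ᵀ)⁻¹ * (cm V)⁻¹ * (cm V + Complex.I • cm (Om n)) * (cm V)⁻¹ * (cm M)⁻¹
      = (cm V - Complex.I • cm (Om n))⁻¹ :=
  inversion_identity_general n V M hV hVpd hM2 hMeig
end
end

section
/- Let A be a Hermitian positive definite N×N complex matrix and let X be an M×N complex matrix of rank M (M ≤ N). Then X A X* is Hermitian positive definite (in particular invertible), and the Hermitian matrix A^{-1} − X* (X A X*)^{-1} X is positive semidefinite, where X* denotes the conjugate transpose. -/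
/-!
Since `A⁻¹ A A⁻¹ = A⁻¹`, the block matrix `[[X A Xᴴ, X], [Xᴴ, A⁻¹]]` factors as `R A Rᴴ` with
`R = [X; A⁻¹]`, hence is positive semidefinite. Full row rank of `X` makes its top-left block
`X A Xᴴ` positive definite, and the Schur complement of that block, `A⁻¹ - Xᴴ (X A Xᴴ)⁻¹ X`, is
then positive semidefinite.
-/

open Matrix
open scoped ComplexOrder

namespace Matrix

variable {m n K : Type*} [Fintype n]

theorem fromBlocks_eq_fromRows_mul_mul_conjTranspose [DecidableEq n] [CommRing K] [StarRing K]
    {A : Matrix n n K} (hA : A.IsHermitian) [Invertible A] (X : Matrix m n K) :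
    fromBlocks (X * A * Xᴴ) X Xᴴ A⁻¹ = fromRows X A⁻¹ * A * (fromRows X A⁻¹)ᴴ := by
  have hA_inv : A⁻¹ᴴ = A⁻¹ := by rw [conjTranspose_nonsing_inv, hA.eq]
  rw [conjTranspose_fromRows_eq_fromCols_conjTranspose, hA_inv, fromRows_mul,
    fromRows_mul_fromCols, inv_mul_of_invertible, Matrix.one_mul, Matrix.mul_assoc X A A⁻¹,
    mul_inv_of_invertible, Matrix.mul_one, Matrix.one_mul]

variable [Fintype m]

theorem linearIndependent_row_iff_rank_eq_card [Field K] {X : Matrix m n K} :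
    LinearIndependent K X.row ↔ X.rank = Fintype.card m := by
  rw [rank_eq_finrank_span_row, linearIndependent_iff_card_eq_finrank_span, Set.finrank, eq_comm]

theorem vecMul_injective_of_rank_eq_card [Field K] {X : Matrix m n K}
    (hX : X.rank = Fintype.card m) : Function.Injective X.vecMul :=
  vecMul_injective_iff.mpr (linearIndependent_row_iff_rank_eq_card.mpr hX)

variable [DecidableEq m] [DecidableEq n] [Field K] [PartialOrder K] [StarRing K] [StarOrderedRing K]

theorem PosDef.posSemidef_inv_sub_conjTranspose_mul_inv_mul {A : Matrix n n K} (hA : A.PosDef)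
    {X : Matrix m n K} (hXAX : (X * A * Xᴴ).PosDef) :
    (A⁻¹ - Xᴴ * (X * A * Xᴴ)⁻¹ * X).PosSemidef := by
  have := hA.isUnit.invertible
  have := hXAX.isUnit.invertible
  rw [← PosDef.fromBlocks₁₁ X A⁻¹ hXAX, fromBlocks_eq_fromRows_mul_mul_conjTranspose hA.1]
  exact hA.posSemidef.mul_mul_conjTranspose_same _

end Matrix

theorem inv_sub_conjTranspose_sandwich_posSemidef_general (N M : ℕ)
    (A : Matrix (Fin N) (Fin N) ℂ) (hA : A.PosDef)
    (X : Matrix (Fin M) (Fin N) ℂ) (hX : X.rank = M) :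
    (X * A * Xᴴ).PosDef ∧ (A⁻¹ - Xᴴ * (X * A * Xᴴ)⁻¹ * X).PosSemidef := by
  have hXAX : (X * A * Xᴴ).PosDef :=
    hA.mul_mul_conjTranspose_same (vecMul_injective_of_rank_eq_card (by rwa [Fintype.card_fin]))
  exact ⟨hXAX, hA.posSemidef_inv_sub_conjTranspose_mul_inv_mul hXAX⟩

/-- For a Hermitian positive definite `N × N` complex matrix `A` and an `M × N` complex matrix
`X` of rank `M` (with `M ≤ N`), the matrix `X A X*` is Hermitian positive definite, and
`A⁻¹ - X* (X A X*)⁻¹ X` is positive semidefinite. -/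
theorem inv_sub_conjTranspose_sandwich_posSemidef (N M : ℕ) (hMN : M ≤ N)
    (A : Matrix (Fin N) (Fin N) ℂ) (hA : A.PosDef)
    (X : Matrix (Fin M) (Fin N) ℂ) (hX : X.rank = M) :
    (X * A * Xᴴ).PosDef ∧ (A⁻¹ - Xᴴ * (X * A * Xᴴ)⁻¹ * X).PosSemidef :=
  inv_sub_conjTranspose_sandwich_posSemidef_general N M A hA X hX
end
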